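/- The map Δ₂ is coassociative, (Δ₂ ⊗ id) ∘ Δ₂ = (id ⊗ Δ₂) ∘ Δ₂, and ε is a counit for it, (ε ⊗ id) ∘ Δ₂ = id = (id ⊗ ε) ∘ Δ₂; hence (H^red_pl, concatenation product, unit 1, Δ₂, ε) is a bialgebra. -/

import Mathlib

inductive R : Type
  | leaf : R
  | node : R → R → List R → R

mutual
/-- The list of all admissible cuts of a reduced planar tree, each cut `c` recorded as
the pair `(P^c(t), R^c(t))` of its pruning (an ordered forest, the subtrees standing
above the cut edges listed from left to right) and its trunk (the tree obtained by
replacing each such subtree by a single leaf).  The empty cut contributes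
`([], t)` and the cut at the root edge contributes `([t], |)`. -/
def allCuts : R → List (List R × R)
  | .leaf => [([], R.leaf)]
  | .node t1 t2 rest =>
      ([R.node t1 t2 rest], R.leaf) ::
      (allCuts t1).flatMap (fun p1 =>
        (allCuts t2).flatMap (fun p2 =>
          (cutsL rest).map (fun q =>
            (p1.1 ++ p2.1 ++ q.1, R.node p1.2 p2.2 q.2))))

/-- Admissible cuts of a forest: a choice of admissible cut in each tree of the list. -/
def cutsL : List R → List (List R × List R)
  | [] => [([], [])]
  | u :: us =>
      (allCuts u).flatMap (fun p =>
        (cutsL us).map (fun q => (p.1 ++ q.1, p.2 :: q.2)))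
end

/-- Non-leaf reduced planar trees, the generators of `H^red_pl`. -/
def Rp : Type := {t : R // t ≠ R.leaf}

/-- Casting a reduced planar tree to an optional generator (`|` is read as nothing). -/
def toRp? : R → Option Rp
  | R.leaf => none
  | R.node t1 t2 rest => some ⟨R.node t1 t2 rest, fun h => R.noConfusion h⟩

/-- A forest (with occurrences of the leaf `|` read as the empty word `1`), as a word
in the non-leaf reduced planar trees. -/
def listToF (l : List R) : FreeMonoid Rp := FreeMonoid.ofList (l.filterMap toRp?)

variable (k : Type*) [Field k]

/-- `H^red_pl`: the free associative unital `k`-algebra with basis the forests (words)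
in the non-leaf reduced planar trees, with concatenation product. -/
abbrev H := MonoidAlgebra k (FreeMonoid Rp)

/-- The image in `H^red_pl` of a single reduced planar tree (`|` is read as `1`). -/
noncomputable def emb (t : R) : H k := MonoidAlgebra.single (listToF [t]) (1 : k)

/-- The coproduct of a generator: `Δ₂(t) = Σ_c P^c(t) ⊗ R^c(t)` over admissible cuts. -/
noncomputable def deltaTree (t : Rp) : TensorProduct k (H k) (H k) :=
  ((allCuts t.1).map (fun c =>
    TensorProduct.tmul k (MonoidAlgebra.single (listToF c.1) (1 : k)) (emb k c.2))).sum

/-- The coproduct `Δ₂ : H^red_pl → H^red_pl ⊗ H^red_pl`, the algebra map extending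
`deltaTree` multiplicatively (so `Δ₂(t1⋯tk) = Δ₂(t1)⋯Δ₂(tk)` and `Δ₂(1) = 1 ⊗ 1`). -/
noncomputable def Delta2 : H k →ₐ[k] TensorProduct k (H k) (H k) :=
  MonoidAlgebra.lift k (TensorProduct k (H k) (H k)) (FreeMonoid Rp)
    (FreeMonoid.lift (deltaTree k))

/-- The counit `ε : H^red_pl → k`: `ε(1) = 1` and `ε = 0` on nonempty forests. -/
noncomputable def eps : H k →ₐ[k] k :=
  MonoidAlgebra.lift k k (FreeMonoid Rp) (FreeMonoid.lift (fun _ : Rp => (0 : k)))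

/-!
Since `Δ₂` and `ε` are algebra maps, the three identities need only be checked on a single
tree `t`. There `(Δ₂ ⊗ id) Δ₂ t` is a sum over a cut of `t` followed by a cut of its pruning,
and `(id ⊗ Δ₂) Δ₂ t` a sum over a cut of `t` followed by a cut of its trunk; both really range
over pairs of nested cuts. Instead of writing down that bijection, we show that the two
multisets of terms obey the same recursion at the root (the terms with final trunk `|`, plus
the terms for the children, combined tree by tree and grafted back together), so they agree by
induction on trees and forests. For the counit, the empty cut is the only cut whose pruning has
nonzero counit, and the root cut the only one whose trunk does. The first fact needs the same
induction, which goes through for `Σ_c ε(P^c) • φ(R^c) = φ(t)` with `φ` arbitrary.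
-/

open TensorProduct

/-- `∨(t₁, …, tₙ)` for `n ≥ 2`; the value `|` on shorter lists is never used. -/
def graft : List R → R
  | t1 :: t2 :: rest => R.node t1 t2 rest
  | _ => R.leaf

theorem cutsL_singleton (t : R) : cutsL [t] = (allCuts t).map fun c => (c.1, [c.2]) := by
  simp [cutsL, List.map_eq_flatMap]

theorem cutsL_append (a b : List R) :
    cutsL (a ++ b) =
      (cutsL a).flatMap fun c => (cutsL b).map fun d => (c.1 ++ d.1, c.2 ++ d.2) := by
  induction a with
  | nil => simp [cutsL]
  | cons u us ih =>
    simp only [List.cons_append, cutsL, ih, List.flatMap_assoc, List.flatMap_map,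
      List.map_flatMap, List.map_map]
    simp [Function.comp_def, List.append_assoc]

theorem length_snd_of_mem_cutsL {l : List R} {c : List R × List R} (h : c ∈ cutsL l) :
    c.2.length = l.length := by
  induction l generalizing c with
  | nil => simp_all [cutsL]
  | cons u us ih =>
    simp only [cutsL, List.mem_flatMap, List.mem_map] at h
    obtain ⟨p, -, q, hq, rfl⟩ := h
    simp [ih hq]

theorem graft_ne_leaf : ∀ {m : List R}, 2 ≤ m.length → graft m ≠ R.leaf
  | _ :: _ :: _, _ => R.noConfusion

theorem allCuts_graft : ∀ {m : List R}, 2 ≤ m.length →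
    allCuts (graft m) = ([graft m], R.leaf) :: (cutsL m).map fun c => (c.1, graft c.2)
  | _ :: _ :: _, _ => by
    simp [graft, allCuts, cutsL, List.map_flatMap, List.append_assoc, Function.comp_def]

@[simp] theorem listToF_append (a b : List R) : listToF (a ++ b) = listToF a * listToF b := by
  simp [listToF, List.filterMap_append]

@[simp] theorem listToF_nil : listToF [] = 1 := rfl

@[simp] theorem listToF_leaf : listToF [R.leaf] = 1 := rfl

section IteratedCuts

variable {α : Type*} (cuts : α → List (List R × α))

/-- The terms of `(Δ₂ ⊗ id) ∘ Δ₂`: a cut of `x`, followed by a cut of its pruning. -/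
def pruningCuts (x : α) : Multiset (FreeMonoid Rp × FreeMonoid Rp × α) :=
  (cuts x : Multiset (List R × α)).bind fun c =>
    (cutsL c.1 : Multiset (List R × List R)).map fun d => (listToF d.1, listToF d.2, c.2)

/-- The terms of `(id ⊗ Δ₂) ∘ Δ₂`: a cut of `x`, followed by a cut of its trunk. -/
def trunkCuts (x : α) : Multiset (FreeMonoid Rp × FreeMonoid Rp × α) :=
  (cuts x : Multiset (List R × α)).bind fun c =>
    (cuts c.2 : Multiset (List R × α)).map fun d => (listToF c.1, listToF d.1, d.2)

end IteratedCuts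

def consTriples (M : Multiset (FreeMonoid Rp × FreeMonoid Rp × R))
    (N : Multiset (FreeMonoid Rp × FreeMonoid Rp × List R)) :
    Multiset (FreeMonoid Rp × FreeMonoid Rp × List R) :=
  M.bind fun x => N.map fun y => (x.1 * y.1, x.2.1 * y.2.1, x.2.2 :: y.2.2)

def leafTrunkTriples (t : R) : Multiset (FreeMonoid Rp × FreeMonoid Rp × R) :=
  (allCuts t : Multiset (List R × R)).map fun c => (listToF c.1, listToF [c.2], R.leaf)

theorem pruningCuts_cutsL_cons (u : R) (us : List R) :
    pruningCuts cutsL (u :: us) = consTriples (pruningCuts allCuts u) (pruningCuts cutsL us) := by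
  simp only [pruningCuts, consTriples, cutsL, cutsL_append, ← Multiset.coe_bind,
    ← Multiset.map_coe, Multiset.bind_assoc, Multiset.bind_map, Multiset.map_bind,
    Multiset.map_map, Function.comp_def, listToF_append]
  exact Multiset.bind_congr fun _ _ => Multiset.bind_bind _ _

theorem trunkCuts_cutsL_cons (u : R) (us : List R) :
    trunkCuts cutsL (u :: us) = consTriples (trunkCuts allCuts u) (trunkCuts cutsL us) := by
  simp only [trunkCuts, consTriples, cutsL, ← Multiset.coe_bind,
    ← Multiset.map_coe, Multiset.bind_assoc, Multiset.bind_map, Multiset.map_bind,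
    Multiset.map_map, Function.comp_def, listToF_append]
  exact Multiset.bind_congr fun _ _ => Multiset.bind_bind _ _

theorem pruningCuts_allCuts_graft {m : List R} (hm : 2 ≤ m.length) :
    pruningCuts allCuts (graft m) =
      leafTrunkTriples (graft m) + (pruningCuts cutsL m).map (Prod.map id (Prod.map id graft)) := by
  rw [pruningCuts, allCuts_graft hm, ← Multiset.cons_coe, Multiset.cons_bind, leafTrunkTriples]
  congr 1
  · simp [cutsL_singleton, Function.comp_def]
  · simp [pruningCuts, ← Multiset.map_coe, Multiset.bind_map, Multiset.map_bind]

theorem trunkCuts_allCuts_graft {m : List R} (hm : 2 ≤ m.length) :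
    trunkCuts allCuts (graft m) =
      leafTrunkTriples (graft m) + (trunkCuts cutsL m).map (Prod.map id (Prod.map id graft)) := by
  have htrunk : ∀ c ∈ (cutsL m : Multiset (List R × List R)), 2 ≤ c.2.length := fun c hc => by
    rwa [length_snd_of_mem_cutsL (Multiset.mem_coe.1 hc)]
  rw [trunkCuts, allCuts_graft hm, ← Multiset.cons_coe, Multiset.cons_bind, leafTrunkTriples,
    allCuts_graft hm]
  simp only [← Multiset.map_coe, Multiset.bind_map]
  rw [Multiset.bind_congr fun c hc => by rw [allCuts_graft (htrunk c hc)]]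
  simp only [← Multiset.cons_coe, Multiset.map_cons, Multiset.bind_cons, Multiset.cons_add]
  simp [trunkCuts, allCuts, ← Multiset.map_coe, Multiset.map_bind]

mutual

theorem pruningCuts_allCuts_eq_trunkCuts : ∀ t : R,
    pruningCuts allCuts t = trunkCuts allCuts t
  | R.leaf => rfl
  | R.node t1 t2 rest => by
    have hm : 2 ≤ (t1 :: t2 :: rest).length := by simp
    rw [show R.node t1 t2 rest = graft (t1 :: t2 :: rest) from rfl,
      pruningCuts_allCuts_graft hm, trunkCuts_allCuts_graft hm, pruningCuts_cutsL_cons,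
      pruningCuts_cutsL_cons, trunkCuts_cutsL_cons, trunkCuts_cutsL_cons,
      pruningCuts_allCuts_eq_trunkCuts t1, pruningCuts_allCuts_eq_trunkCuts t2,
      pruningCuts_cutsL_eq_trunkCuts rest]

theorem pruningCuts_cutsL_eq_trunkCuts : ∀ l : List R,
    pruningCuts cutsL l = trunkCuts cutsL l
  | [] => rfl
  | u :: us => by
    rw [pruningCuts_cutsL_cons, trunkCuts_cutsL_cons, pruningCuts_allCuts_eq_trunkCuts u,
      pruningCuts_cutsL_eq_trunkCuts us]

end

noncomputable def embForest (l : List R) : H k := MonoidAlgebra.single (listToF l) 1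

@[simp] theorem embForest_nil : embForest k [] = 1 := rfl

@[simp] theorem embForest_singleton (t : R) : embForest k [t] = emb k t := rfl

@[simp] theorem emb_leaf : emb k R.leaf = 1 := rfl

theorem embForest_append (a b : List R) :
    embForest k (a ++ b) = embForest k a * embForest k b := by
  simp [embForest, MonoidAlgebra.single_mul_single]

theorem embForest_cons (u : R) (us : List R) :
    embForest k (u :: us) = emb k u * embForest k us :=
  embForest_append k [u] us

theorem emb_val (t : Rp) : emb k t.1 = MonoidAlgebra.single (FreeMonoid.of t) 1 := by
  obtain ⟨_ | _, ht⟩ := t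
  · exact absurd rfl ht
  · rfl

theorem H.algHom_ext {A : Type*} [Semiring A] [Algebra k A] {f g : H k →ₐ[k] A}
    (h : ∀ t : Rp, f (emb k t.1) = g (emb k t.1)) : f = g :=
  MonoidAlgebra.algHom_ext' (FreeMonoid.hom_eq fun t => by simpa [emb_val] using h t)
    (Algebra.ext_id _ _ _)

theorem Delta2_emb_val (t : Rp) : Delta2 k (emb k t.1) = deltaTree k t := by
  rw [emb_val, Delta2, MonoidAlgebra.lift_single, one_smul, FreeMonoid.lift_eval_of]

theorem eps_emb_val (t : Rp) : eps k (emb k t.1) = 0 := by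
  rw [emb_val, eps, MonoidAlgebra.lift_single, one_smul, FreeMonoid.lift_eval_of]

theorem Delta2_emb (t : R) :
    Delta2 k (emb k t) =
      ((allCuts t : Multiset (List R × R)).map fun c => embForest k c.1 ⊗ₜ emb k c.2).sum := by
  cases t with
  | leaf => simp [allCuts, Algebra.TensorProduct.one_def]
  | node t1 t2 rest => exact Delta2_emb_val k ⟨R.node t1 t2 rest, R.noConfusion⟩

theorem Delta2_embForest (l : List R) :
    Delta2 k (embForest k l) =
      ((cutsL l : Multiset (List R × List R)).map fun c =>
        embForest k c.1 ⊗ₜ embForest k c.2).sum := by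
  induction l with
  | nil => simp [cutsL, Algebra.TensorProduct.one_def]
  | cons u us ih =>
    rw [embForest_cons, map_mul, ih, Delta2_emb, ← Multiset.sum_map_mul_right]
    simp only [cutsL, ← Multiset.coe_bind, ← Multiset.map_coe, Multiset.map_bind,
      Multiset.sum_bind]
    refine congrArg Multiset.sum (Multiset.map_congr rfl fun p _ => ?_)
    rw [← Multiset.sum_map_mul_left, Multiset.map_map]
    refine congrArg Multiset.sum (Multiset.map_congr rfl fun q _ => ?_)
    simp [Algebra.TensorProduct.tmul_mul_tmul, embForest_append, embForest_cons]

theorem eps_emb_graft {m : List R} (hm : 2 ≤ m.length) : eps k (emb k (graft m)) = 0 :=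
  eps_emb_val k ⟨graft m, graft_ne_leaf hm⟩

theorem TensorProduct.multiset_sum_tmul {S M N : Type*} [CommSemiring S] [AddCommMonoid M]
    [AddCommMonoid N] [Module S M] [Module S N] (s : Multiset M) (n : N) :
    s.sum ⊗ₜ[S] n = (s.map (· ⊗ₜ[S] n)).sum :=
  map_multiset_sum ((TensorProduct.mk S M N).flip n) s

theorem TensorProduct.tmul_multiset_sum {S M N : Type*} [CommSemiring S] [AddCommMonoid M]
    [AddCommMonoid N] [Module S M] [Module S N] (m : M) (s : Multiset N) :
    m ⊗ₜ[S] s.sum = (s.map (m ⊗ₜ[S] ·)).sum :=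
  map_multiset_sum (TensorProduct.mk S M N m) s

noncomputable def tripleTensor (x : FreeMonoid Rp × FreeMonoid Rp × R) :
    H k ⊗[k] (H k ⊗[k] H k) :=
  MonoidAlgebra.single x.1 1 ⊗ₜ (MonoidAlgebra.single x.2.1 1 ⊗ₜ emb k x.2.2)

theorem assoc_map_Delta2_id_Delta2_emb (t : R) :
    Algebra.TensorProduct.assoc k k k (H k) (H k) (H k)
        (Algebra.TensorProduct.map (Delta2 k) (AlgHom.id k (H k)) (Delta2 k (emb k t))) =
      ((pruningCuts allCuts t).map (tripleTensor k)).sum := by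
  simp only [Delta2_emb, map_multiset_sum, Multiset.map_map, pruningCuts, Multiset.map_bind,
    Multiset.sum_bind]
  refine congrArg Multiset.sum (Multiset.map_congr rfl fun c _ => ?_)
  rw [Function.comp_apply, Function.comp_apply, Algebra.TensorProduct.map_tmul, AlgHom.id_apply,
    Delta2_embForest, TensorProduct.multiset_sum_tmul, map_multiset_sum, Multiset.map_map,
    Multiset.map_map]
  refine congrArg Multiset.sum (Multiset.map_congr rfl fun d _ => ?_)
  simp [tripleTensor, embForest]

theorem map_id_Delta2_Delta2_emb (t : R) :
    Algebra.TensorProduct.map (AlgHom.id k (H k)) (Delta2 k) (Delta2 k (emb k t)) =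
      ((trunkCuts allCuts t).map (tripleTensor k)).sum := by
  simp only [Delta2_emb, map_multiset_sum, Multiset.map_map, trunkCuts, Multiset.map_bind,
    Multiset.sum_bind]
  refine congrArg Multiset.sum (Multiset.map_congr rfl fun c _ => ?_)
  rw [Function.comp_apply, Algebra.TensorProduct.map_tmul, AlgHom.id_apply, Delta2_emb,
    TensorProduct.tmul_multiset_sum, Multiset.map_map]
  rfl

section LeftCounit

variable {M : Type*} [AddCommMonoid M] [Module k M]

theorem sum_cutsL_cons_eps_smul {u : R} {us : List R}
    (hu : ∀ φ : R → M, ((allCuts u : Multiset (List R × R)).map fun c =>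
      eps k (embForest k c.1) • φ c.2).sum = φ u)
    (hus : ∀ ψ : List R → M, ((cutsL us : Multiset (List R × List R)).map fun c =>
      eps k (embForest k c.1) • ψ c.2).sum = ψ us)
    (ψ : List R → M) :
    ((cutsL (u :: us) : Multiset (List R × List R)).map fun c =>
      eps k (embForest k c.1) • ψ c.2).sum = ψ (u :: us) := by
  simp only [cutsL, ← Multiset.coe_bind, ← Multiset.map_coe, Multiset.map_bind, Multiset.sum_bind,
    Multiset.map_map, Function.comp_def, embForest_append, map_mul, mul_smul]
  refine Eq.trans (congrArg Multiset.sum (Multiset.map_congr rfl fun p _ => ?_))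
    (hu fun v => ψ (v :: us))
  rw [← hus fun m => ψ (p.2 :: m), Multiset.smul_sum, Multiset.map_map]
  rfl

mutual

theorem sum_allCuts_eps_smul : ∀ (t : R) (φ : R → M),
    ((allCuts t : Multiset (List R × R)).map fun c => eps k (embForest k c.1) • φ c.2).sum = φ t
  | R.leaf, φ => by simp [allCuts]
  | R.node t1 t2 rest, φ => by
    have hm : 2 ≤ (t1 :: t2 :: rest).length := by simp
    rw [show R.node t1 t2 rest = graft (t1 :: t2 :: rest) from rfl, allCuts_graft hm,
      ← Multiset.cons_coe, Multiset.map_cons, Multiset.sum_cons]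
    rw [embForest_singleton, eps_emb_graft k hm, zero_smul, zero_add, ← Multiset.map_coe,
      Multiset.map_map]
    exact sum_cutsL_cons_eps_smul k (sum_allCuts_eps_smul t1)
      (sum_cutsL_cons_eps_smul k (sum_allCuts_eps_smul t2) (sum_cutsL_eps_smul rest))
      (fun m => φ (graft m))

theorem sum_cutsL_eps_smul : ∀ (l : List R) (ψ : List R → M),
    ((cutsL l : Multiset (List R × List R)).map fun c =>
      eps k (embForest k c.1) • ψ c.2).sum = ψ l
  | [], ψ => by simp [cutsL]
  | u :: us, ψ => sum_cutsL_cons_eps_smul k (sum_allCuts_eps_smul u) (sum_cutsL_eps_smul us) ψ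

end

end LeftCounit

theorem sum_allCuts_eps_trunk_smul (t : R) :
    ((allCuts t : Multiset (List R × R)).map fun c => eps k (emb k c.2) • embForest k c.1).sum =
      emb k t := by
  cases t with
  | leaf => simp [allCuts]
  | node t1 t2 rest =>
    have hm : 2 ≤ (t1 :: t2 :: rest).length := by simp
    rw [show R.node t1 t2 rest = graft (t1 :: t2 :: rest) from rfl, allCuts_graft hm,
      ← Multiset.cons_coe, Multiset.map_cons, Multiset.sum_cons, emb_leaf, map_one, one_smul,
      ← Multiset.map_coe, Multiset.map_map]
    refine add_eq_left.2 (Multiset.sum_eq_zero fun x hx => ?_)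
    obtain ⟨c, hc, rfl⟩ := Multiset.mem_map.1 hx
    have hc2 : 2 ≤ c.2.length := by rwa [length_snd_of_mem_cutsL (Multiset.mem_coe.1 hc)]
    simp [eps_emb_graft k hc2]

theorem Delta2_coassoc :
    (Algebra.TensorProduct.assoc k k k (H k) (H k) (H k)).toAlgHom.comp
        ((Algebra.TensorProduct.map (Delta2 k) (.id k (H k))).comp (Delta2 k)) =
      (Algebra.TensorProduct.map (.id k (H k)) (Delta2 k)).comp (Delta2 k) :=
  H.algHom_ext k fun t => by
    simpa [assoc_map_Delta2_id_Delta2_emb, map_id_Delta2_Delta2_emb] using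
      congrArg (fun s => (s.map (tripleTensor k)).sum) (pruningCuts_allCuts_eq_trunkCuts t.1)

theorem eps_counit_left :
    (Algebra.TensorProduct.lid k (H k)).toAlgHom.comp
        ((Algebra.TensorProduct.map (eps k) (.id k (H k))).comp (Delta2 k)) = .id k (H k) :=
  H.algHom_ext k fun t => by
    rw [AlgHom.comp_apply, AlgHom.comp_apply, Delta2_emb, map_multiset_sum, map_multiset_sum,
      Multiset.map_map, Multiset.map_map, AlgHom.id_apply, ← sum_allCuts_eps_smul k t.1 (emb k)]
    refine congrArg Multiset.sum (Multiset.map_congr rfl fun c _ => ?_)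
    simp

theorem eps_counit_right :
    (Algebra.TensorProduct.rid k k (H k)).toAlgHom.comp
        ((Algebra.TensorProduct.map (.id k (H k)) (eps k)).comp (Delta2 k)) = .id k (H k) :=
  H.algHom_ext k fun t => by
    rw [AlgHom.comp_apply, AlgHom.comp_apply, Delta2_emb, map_multiset_sum, map_multiset_sum,
      Multiset.map_map, Multiset.map_map, AlgHom.id_apply, ← sum_allCuts_eps_trunk_smul k t.1]
    refine congrArg Multiset.sum (Multiset.map_congr rfl fun c _ => ?_)
    simp

/-- `Δ₂` is coassociative and `ε` is a counit for it; hence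
`(H^red_pl, concatenation, 1, Δ₂, ε)` is a bialgebra (`Δ₂` and `ε` being algebra
morphisms by construction). -/
theorem Delta2_coassoc_counit :
    ((TensorProduct.assoc k (H k) (H k) (H k)).toLinearMap ∘ₗ
        TensorProduct.map (Delta2 k).toLinearMap LinearMap.id ∘ₗ (Delta2 k).toLinearMap
      = TensorProduct.map LinearMap.id (Delta2 k).toLinearMap ∘ₗ (Delta2 k).toLinearMap) ∧
    ((TensorProduct.lid k (H k)).toLinearMap ∘ₗ
        TensorProduct.map (eps k).toLinearMap LinearMap.id ∘ₗ (Delta2 k).toLinearMap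
      = LinearMap.id) ∧
    ((TensorProduct.rid k (H k)).toLinearMap ∘ₗ
        TensorProduct.map LinearMap.id (eps k).toLinearMap ∘ₗ (Delta2 k).toLinearMap
      = LinearMap.id) :=
  ⟨congrArg AlgHom.toLinearMap (Delta2_coassoc k), congrArg AlgHom.toLinearMap (eps_counit_left k),
    congrArg AlgHom.toLinearMap (eps_counit_right k)⟩
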